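/- A q-cycle in the symmetric group S_q, where q = p^l is a prime power with l ≥ 1, is not contained in the commutator subgroup of any p-subgroup of S_q that contains it. -/

import Mathlib

/-!
A `p`-group `Q` is nilpotent, so its maximal subgroups are normal with abelian quotient and
`⁅Q, Q⁆` lies in the Frattini subgroup. Since the powers of `σ` act transitively, `Q` is generated
by a point stabilizer together with `σ`; if `σ` were a Frattini element, the stabilizer alone would
be all of `Q`, yet `σ` moves every point.
-/

open Subgroup MulAction

theorem Subgroup.commutator_le_of_isCoatom {G : Type*} [Group G] {M : Subgroup G} [M.Normal]
    (hM : IsCoatom M) : _root_.commutator G ≤ M := by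
  obtain ⟨g, -, hg⟩ := SetLike.exists_of_lt hM.lt_top
  have hsup : M ⊔ zpowers g = ⊤ := hM.2 _ (left_lt_sup.mpr fun h => hg (zpowers_le.mp h))
  exact Normal.commutator_le_of_self_sup_commutative_eq_top hsup inferInstance

theorem Subgroup.NormalizerCondition.commutator_le_frattini {G : Type*} [Group G]
    (hnc : NormalizerCondition G) : _root_.commutator G ≤ frattini G :=
  le_iInf₂ fun M hM =>
    have := NormalizerCondition.normal_of_coatom M hnc hM
    commutator_le_of_isCoatom hM

theorem MulAction.stabilizer_sup_zpowers_eq_top {G X : Type*} [Group G] [MulAction G X]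
    {g : G} {x : X} (htrans : ∀ y : X, ∃ i : ℤ, g ^ i • x = y) :
    stabilizer G x ⊔ zpowers g = ⊤ := by
  refine eq_top_iff.mpr fun h _ => ?_
  obtain ⟨i, hi⟩ := htrans (h • x)
  have hstab : (g ^ i)⁻¹ * h ∈ stabilizer G x := by
    rw [mem_stabilizer_iff, mul_smul, ← hi, inv_smul_smul]
  rw [← mul_inv_cancel_left (g ^ i) h, sup_comm]
  exact mul_mem_sup (zpow_mem (mem_zpowers g) i) hstab

theorem MulAction.smul_eq_of_mem_frattini {G X : Type*} [Group G] [Finite G] [MulAction G X]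
    {g : G} (hg : g ∈ frattini G) {x : X} (htrans : ∀ y : X, ∃ i : ℤ, g ^ i • x = y) :
    g • x = x := by
  have hsup : stabilizer G x ⊔ frattini G = ⊤ :=
    top_le_iff.mp <| stabilizer_sup_zpowers_eq_top htrans ▸ sup_le_sup_left (zpowers_le.mpr hg) _
  have hstab : stabilizer G x = ⊤ := frattini_nongenerating hsup
  exact mem_stabilizer_iff.mp (hstab ▸ mem_top g)

theorem cycle_not_in_commutator_of_pSubgroup_general {p : ℕ} (hp : p.Prime)
    (q : ℕ) (σ : Equiv.Perm (Fin q))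
    (hcyc : σ.IsCycle) (hsupp : σ.support.card = q)
    (Q : Subgroup (Equiv.Perm (Fin q))) (hQ : IsPGroup p Q) (hmem : σ ∈ Q) :
    σ ∉ ⁅Q, Q⁆ := by
  intro hσ
  have : Fact p.Prime := ⟨hp⟩
  let τ : Q := ⟨σ, hmem⟩
  have hτ : τ ∈ commutator Q := by
    rw [← Q.map_subtype_commutator] at hσ
    obtain ⟨τ', hτ', hτ'σ⟩ := hσ
    exact (Subtype.ext hτ'σ : τ' = τ) ▸ hτ'
  have hmove : ∀ x, σ x ≠ x := fun x => Equiv.Perm.mem_support.mp <| by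
    rw [Finset.eq_univ_of_card σ.support (hsupp.trans (Fintype.card_fin q).symm)]
    exact Finset.mem_univ x
  obtain ⟨x, hx, hsame⟩ := hcyc
  have htrans : ∀ y, ∃ i : ℤ, τ ^ i • x = y := fun y => hsame (hmove y)
  have : Group.IsNilpotent Q := hQ.isNilpotent
  have hfrattini := Group.normalizerCondition_of_isNilpotent.commutator_le_frattini hτ
  exact hx (smul_eq_of_mem_frattini hfrattini htrans)

/-- A `q`-cycle in `S_q`, `q = pˡ` a prime power with `l ≥ 1`, is not contained in the
commutator subgroup of any `p`-subgroup of `S_q` containing it. -/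
theorem cycle_not_in_commutator_of_pSubgroup {p l : ℕ} (hp : p.Prime) (hl : 1 ≤ l)
    (q : ℕ) (hq : q = p ^ l) (σ : Equiv.Perm (Fin q))
    (hcyc : σ.IsCycle) (hsupp : σ.support.card = q)
    (Q : Subgroup (Equiv.Perm (Fin q))) (hQ : IsPGroup p Q) (hmem : σ ∈ Q) :
    σ ∉ ⁅Q, Q⁆ :=
  cycle_not_in_commutator_of_pSubgroup_general hp q σ hcyc hsupp Q hQ hmem
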